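/- arXiv:2009.05692 — 2 statements merged into one kernel-verified Lean document; each statement's English description precedes it below -/
import Mathlib

section
/- For every n ≥ 1 and every choice of signs x₁, …, xₙ ∈ {−1, 1}, the polynomial ∑_{i=1}^n xᵢ Tᵢ satisfies ‖∑_{i=1}^n xᵢ Tᵢ‖∞ ≥ √(n/2). -/
open Polynomial Real

/-- The Chebyshev norm of a real polynomial: `sup_{|x| ≤ 1} |p(x)|`. -/
noncomputable def chebNorm (p : Polynomial ℝ) : ℝ :=
  ⨆ x : Set.Icc (-1 : ℝ) 1, |p.eval (x : ℝ)|

/-!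
Evaluate `p = ∑ cᵢ Tᵢ` (indices `1 ≤ i < N`) at the Chebyshev nodes `cos θₖ`,
`θₖ = (2k+1)π/(2N)`, `k < N`, where `p(cos θₖ) = ∑ cᵢ cos(i θₖ)`. Since
`2 sin α ∑ₖ cos((2k+1)α) = sin(2Nα)` telescopes, the `cos(i θ)` are orthogonal over the nodes,
so `∑ₖ p(cos θₖ)² = (N/2) ∑ cᵢ²`; some node thus has `p(cos θₖ)² ≥ ∑ cᵢ² / 2`.
For signs `cᵢ = ±1` this is `n/2`.
-/

theorem two_mul_sin_mul_sum_range_cos_odd_mul (N : ℕ) (α : ℝ) :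
    2 * sin α * ∑ k ∈ Finset.range N, cos ((2 * k + 1) * α) = sin (2 * N * α) := by
  have telescope : ∀ k : ℕ,
      sin (2 * (k + 1 : ℕ) * α) - sin (2 * k * α) = 2 * sin α * cos ((2 * k + 1) * α) := by
    intro k
    rw [show (2 * ((k + 1 : ℕ) : ℝ)) * α = (2 * k + 1) * α + α by push_cast; ring,
      show (2 * (k : ℝ)) * α = (2 * k + 1) * α - α by ring, sin_add, sin_sub]
    ring
  rw [Finset.mul_sum, ← Finset.sum_congr rfl fun k _ => telescope k,
    Finset.sum_range_sub (fun k : ℕ => sin (2 * (k : ℝ) * α))]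
  simp

noncomputable def chebNodeAngle (N k : ℕ) : ℝ := (2 * k + 1) * π / (2 * N)

theorem sum_range_cos_int_mul_chebNodeAngle (N : ℕ) {d : ℤ} (hd : d ≠ 0) (hdN : |d| < 2 * N) :
    ∑ k ∈ Finset.range N, cos (d * chebNodeAngle N k) = 0 := by
  have hN : (0 : ℝ) < 2 * N := by
    have : (0 : ℤ) < 2 * N := lt_of_le_of_lt (abs_nonneg d) hdN
    exact_mod_cast this
  set α : ℝ := d * π / (2 * N)
  have hsin : sin α ≠ 0 := by
    have hdN' : |(d : ℝ)| < 2 * N := by exact_mod_cast hdN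
    have hα : |α| < π := by
      rw [abs_div, abs_mul, abs_of_pos pi_pos, abs_of_pos hN, div_lt_iff₀ hN]
      nlinarith [pi_pos]
    rw [Ne, sin_eq_zero_iff_of_lt_of_lt (abs_lt.mp hα).1 (abs_lt.mp hα).2]
    exact div_ne_zero (mul_ne_zero (Int.cast_ne_zero.mpr hd) pi_ne_zero) hN.ne'
  have hperiod : sin (2 * N * α) = 0 := by
    rw [show 2 * N * α = d * π from mul_div_cancel₀ _ hN.ne']
    exact sin_int_mul_pi d
  have hsum := two_mul_sin_mul_sum_range_cos_odd_mul N α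
  rw [hperiod] at hsum
  convert (mul_eq_zero.mp hsum).resolve_left (mul_ne_zero two_ne_zero hsin) using 3
  simp only [chebNodeAngle, α]
  ring

theorem sum_range_cos_mul_chebNodeAngle_mul_cos (N : ℕ) {i j : ℕ} (hi : 0 < i) (hiN : i < N)
    (hjN : j < N) :
    ∑ k ∈ Finset.range N, cos (i * chebNodeAngle N k) * cos (j * chebNodeAngle N k)
      = if i = j then (N : ℝ) / 2 else 0 := by
  have product_to_sum : ∀ t : ℝ, cos (i * t) * cos (j * t)
      = (cos (((i + j : ℤ) : ℝ) * t) + cos (((i - j : ℤ) : ℝ) * t)) / 2 := by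
    intro t
    push_cast
    rw [add_mul, sub_mul, cos_add, cos_sub]
    ring
  simp only [product_to_sum]
  rw [← Finset.sum_div, Finset.sum_add_distrib,
    sum_range_cos_int_mul_chebNodeAngle N (by omega) (by rw [abs_lt]; omega)]
  split_ifs with hij
  · simp [hij]
  · rw [sum_range_cos_int_mul_chebNodeAngle N (by omega) (by rw [abs_lt]; omega)]
    simp

theorem sum_range_sq_sum_mul_cos_chebNodeAngle (N : ℕ) (s : Finset ℕ)
    (hs : ∀ i ∈ s, 0 < i ∧ i < N) (c : ℕ → ℝ) :
    ∑ k ∈ Finset.range N, (∑ i ∈ s, c i * cos (i * chebNodeAngle N k)) ^ 2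
      = N / 2 * ∑ i ∈ s, c i ^ 2 := by
  calc ∑ k ∈ Finset.range N, (∑ i ∈ s, c i * cos (i * chebNodeAngle N k)) ^ 2
      = ∑ i ∈ s, ∑ j ∈ s, c i * c j * ∑ k ∈ Finset.range N,
          cos (i * chebNodeAngle N k) * cos (j * chebNodeAngle N k) := by
        simp_rw [sq, Finset.sum_mul_sum, Finset.mul_sum]
        exact Finset.sum_comm.trans <| Finset.sum_congr rfl fun i _ => Finset.sum_comm.trans <|
          Finset.sum_congr rfl fun j _ => Finset.sum_congr rfl fun k _ => by ring
    _ = ∑ i ∈ s, ∑ j ∈ s, if i = j then c i * c j * (N / 2) else 0 := by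
        refine Finset.sum_congr rfl fun i hi => Finset.sum_congr rfl fun j hj => ?_
        rw [sum_range_cos_mul_chebNodeAngle_mul_cos N (hs i hi).1 (hs i hi).2 (hs j hj).2]
        split_ifs <;> simp
    _ = N / 2 * ∑ i ∈ s, c i ^ 2 := by
        simp only [Finset.sum_ite_eq, Finset.mul_sum]
        exact Finset.sum_congr rfl fun i hi => by rw [if_pos hi]; ring

theorem abs_eval_le_chebNorm (p : ℝ[X]) {y : ℝ} (hy : y ∈ Set.Icc (-1 : ℝ) 1) :
    |p.eval y| ≤ chebNorm p := by
  obtain ⟨C, hC⟩ := isCompact_Icc.exists_bound_of_continuousOn p.continuous.continuousOn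
  exact le_ciSup (f := fun z : Set.Icc (-1 : ℝ) 1 => |p.eval (z : ℝ)|)
    ⟨C, by rintro _ ⟨z, rfl⟩; exact hC z z.2⟩ ⟨y, hy⟩

theorem chebNorm_nonneg (p : ℝ[X]) : 0 ≤ chebNorm p :=
  (abs_nonneg _).trans (abs_eval_le_chebNorm p (y := 0) ⟨by norm_num, by norm_num⟩)

theorem sum_sq_le_two_mul_chebNorm_sq (s : Finset ℕ) (hs : 0 ∉ s) (c : ℕ → ℝ) :
    ∑ i ∈ s, c i ^ 2 ≤ 2 * chebNorm (∑ i ∈ s, c i • Chebyshev.T ℝ i) ^ 2 := by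
  set p := ∑ i ∈ s, c i • Chebyshev.T ℝ i
  set N := s.sup id + 1
  have hsN : ∀ i ∈ s, 0 < i ∧ i < N := fun i hi =>
    ⟨Nat.pos_of_ne_zero fun h => hs (h ▸ hi), Nat.lt_succ_of_le (s.le_sup (f := id) hi)⟩
  have eval_node : ∀ k, p.eval (cos (chebNodeAngle N k))
      = ∑ i ∈ s, c i * cos (i * chebNodeAngle N k) := by
    intro k
    simp only [p, eval_finsetSum, eval_smul, smul_eq_mul]
    exact Finset.sum_congr rfl fun i _ => by rw [Chebyshev.T_real_cos]; push_cast; rfl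
  have node_le : ∀ k, p.eval (cos (chebNodeAngle N k)) ^ 2 ≤ chebNorm p ^ 2 := by
    intro k
    rw [← sq_abs]
    exact pow_le_pow_left₀ (abs_nonneg _)
      (abs_eval_le_chebNorm p ⟨neg_one_le_cos _, cos_le_one _⟩) 2
  have hN : (0 : ℝ) < N := by positivity
  have hparseval : (N : ℝ) / 2 * ∑ i ∈ s, c i ^ 2 ≤ N * chebNorm p ^ 2 := by
    calc (N : ℝ) / 2 * ∑ i ∈ s, c i ^ 2
        = ∑ k ∈ Finset.range N, p.eval (cos (chebNodeAngle N k)) ^ 2 := by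
          simp only [eval_node, sum_range_sq_sum_mul_cos_chebNodeAngle N s hsN]
      _ ≤ ∑ k ∈ Finset.range N, chebNorm p ^ 2 := Finset.sum_le_sum fun k _ => node_le k
      _ = N * chebNorm p ^ 2 := by simp
  nlinarith

theorem chebyshev_signed_sum_lower_bound_general (n : ℕ) (x : ℕ → ℝ)
    (hx : ∀ i, x i = 1 ∨ x i = -1) :
    chebNorm (∑ i ∈ Finset.Icc 1 n, x i • Polynomial.Chebyshev.T ℝ i) ≥
      Real.sqrt (n / 2) := by
  have hsq : ∑ i ∈ Finset.Icc 1 n, x i ^ 2 = n := by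
    have hx_sq : ∀ i, x i ^ 2 = 1 := fun i => by rcases hx i with h | h <;> simp [h]
    simp [hx_sq]
  have hbound := sum_sq_le_two_mul_chebNorm_sq (Finset.Icc 1 n) (by simp) x
  rw [hsq] at hbound
  exact Real.sqrt_le_iff.mpr ⟨chebNorm_nonneg _, by linarith⟩

theorem chebyshev_signed_sum_lower_bound (n : ℕ) (hn : 1 ≤ n) (x : ℕ → ℝ)
    (hx : ∀ i, x i = 1 ∨ x i = -1) :
    chebNorm (∑ i ∈ Finset.Icc 1 n, x i • Polynomial.Chebyshev.T ℝ i) ≥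
      Real.sqrt (n / 2) :=
  chebyshev_signed_sum_lower_bound_general n x hx
end

section
/- Let n ≥ 1, let p be a real polynomial of degree at most n, and let θ₀ ∈ [0, π/(9n)] be fixed. If |p(cos(θ₀ + kπ/(9n)))| ≤ 1 for all k ∈ {0, 1, …, 9n − 1}, then ‖p‖∞ < 5/3. -/
/-!
Put `f θ = p (cos θ)`, a trigonometric polynomial of degree at most `n`, and `M = ‖p‖∞ = sup |f|`.
By Bernstein's inequality `|f'| ≤ n M`, so `f` is `n M`-Lipschitz. Every `θ ∈ [0, π]` lies within
`δ = π / (9 n)` of a node `θ₀ + k δ`, hence `M ≤ 1 + n M δ = 1 + M π / 9`, i.e.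
`M ≤ 9 / (9 - π) < 5 / 3`.

Bernstein's inequality is proved by comparison: if `f'` had its maximum `n A > n M` at `θ`, then
`h t = A sin (n (t - θ)) - f t` would alternate in sign at `2n + 1` points spanning a period, so by
Rolle `h'` would have `2n` zeros in a period besides its double zero at `θ`. But writing a
trigonometric polynomial of degree `≤ n` as `e^{-int} H(e^{it})` with `deg H ≤ 2n` shows that,
unless it vanishes, it has at most `2n` zeros per period counted with multiplicity.
-/

open Polynomial Real

open Complex (I)
open Set

theorem Polynomial.natDegree_X_mul_derivative_le {R : Type*} [CommSemiring R] (p : R[X]) :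
    (X * derivative p).natDegree ≤ p.natDegree := by
  rcases Nat.eq_zero_or_pos p.natDegree with h | h
  · simp [derivative_of_natDegree_zero h]
  · exact (natDegree_mul_le_of_le natDegree_X_le (natDegree_derivative_le p)).trans (by omega)

theorem Polynomial.card_add_one_le_natDegree {R : Type*} [CommRing R] [IsDomain R]
    [DecidableEq R] {p : R[X]} (hp : p ≠ 0) {S : Finset R} (hS : ∀ x ∈ S, p.IsRoot x) {v : R}
    (hv : 1 < p.rootMultiplicity v) : S.card + 1 ≤ p.natDegree := by
  have hle : v ::ₘ S.val ≤ p.roots := by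
    refine Multiset.le_iff_count.2 fun z ↦ ?_
    rw [count_roots]
    rcases eq_or_ne z v with rfl | hzv
    · have := Multiset.nodup_iff_count_le_one.1 S.nodup z
      rw [Multiset.count_cons_self]
      omega
    · rw [Multiset.count_cons_of_ne hzv]
      by_cases hzS : z ∈ S
      · rw [Multiset.count_eq_one_of_mem S.nodup hzS]
        exact (rootMultiplicity_pos hp).2 (hS z hzS)
      · simp [Multiset.count_eq_zero.2 hzS]
  simpa using (Multiset.card_le_card hle).trans (card_roots' p)

theorem exists_zero_mem_Ioo_of_alternating {g : ℝ → ℝ} (hg : Continuous g) {t : ℕ → ℝ}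
    (ht : StrictMono t) (halt : ∀ j, 0 < (-1) ^ j * g (t j)) (j : ℕ) :
    ∃ x ∈ Ioo (t j) (t (j + 1)), g x = 0 := by
  have hsign : g (t j) * g (t (j + 1)) < 0 := by
    have := mul_pos (halt j) (halt (j + 1))
    rw [pow_succ] at this
    have hsq : ((-1 : ℝ) ^ j) * (-1) ^ j = 1 := by rw [← mul_pow]; norm_num
    nlinarith
  rcases mul_neg_iff.1 hsign with ⟨hpos, hneg⟩ | ⟨hneg, hpos⟩
  · exact intermediate_value_Ioo' (ht j.lt_succ_self).le hg.continuousOn ⟨hneg, hpos⟩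
  · exact intermediate_value_Ioo (ht j.lt_succ_self).le hg.continuousOn ⟨hneg, hpos⟩

theorem exists_finset_deriv_eq_zero {g : ℝ → ℝ} (hg : Continuous g) {m : ℕ} {α : ℕ → ℝ}
    (hα : StrictMonoOn α (Iic m)) (hzero : ∀ j ≤ m, g (α j) = 0) :
    ∃ s : Finset ℝ, s.card = m ∧ ↑s ⊆ Ioo (α 0) (α m) ∧ ∀ x ∈ s, deriv g x = 0 := by
  have hrolle (j : Fin m) : ∃ x ∈ Ioo (α j) (α (j + 1)), deriv g x = 0 :=
    exists_deriv_eq_zero (hα (by simp) (by simp) (by simp)) hg.continuousOn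
      (by rw [hzero j (by omega), hzero (j + 1) (by omega)])
  choose β hβ hβ0 using hrolle
  have hαmono := hα.monotoneOn
  have hβmono : StrictMono β := fun i j hij ↦
    ((hβ i).2.trans_le (hαmono (by simp) (by simp) (by omega))).trans (hβ j).1
  refine ⟨Finset.univ.map ⟨β, hβmono.injective⟩, by simp, ?_, by simpa using hβ0⟩
  intro x hx
  obtain ⟨j, rfl⟩ : ∃ j, β j = x := by simpa using hx
  exact ⟨(hαmono (by simp) (by simp) (Nat.zero_le j)).trans_lt (hβ j).1,
    (hβ j).2.trans_le (hαmono (by simp) (by simp) (by omega))⟩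

theorem hasDerivAt_exp_mul_I (t : ℝ) :
    HasDerivAt (fun s : ℝ ↦ Complex.exp (s * I)) (Complex.exp (t * I) * I) t := by
  simpa using ((hasDerivAt_id t).ofReal_comp.mul_const I).cexp

theorem exp_mul_I_pow_mul_deriv {F : ℂ[X]} {n : ℕ} {f : ℝ → ℝ} (hf : Differentiable ℝ f)
    (hFf : ∀ t : ℝ, F.eval (Complex.exp (t * I)) = Complex.exp (t * I) ^ n * f t) (t : ℝ) :
    Complex.exp (t * I) ^ n * deriv f t = I * (Complex.exp (t * I) * F.derivative.eval
      (Complex.exp (t * I)) - n * F.eval (Complex.exp (t * I))) := by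
  set u := Complex.exp (t * I)
  have hF := (F.hasDerivAt u).comp t (hasDerivAt_exp_mul_I t)
  have hprod := ((hasDerivAt_exp_mul_I t).pow n).mul (hf t).hasDerivAt.ofReal_comp
  rw [show F.eval ∘ (fun s : ℝ ↦ Complex.exp (s * I)) = _ from funext hFf] at hF
  have h := hF.unique hprod
  simp only [Pi.pow_apply] at h
  have hpow : (n : ℂ) * u ^ (n - 1) * u = n * u ^ n := by
    cases n <;> simp [pow_succ, mul_assoc]
  linear_combination (-1) * h - I * (f t : ℂ) * hpow + (n : ℂ) * I * hFf t

/-- Real trigonometric polynomials `f t = ∑_{|k| ≤ n} c_k e^{ikt}` of degree at most `n`, encoded by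
the polynomial `H = ∑ c_k X^{k+n}`. -/
def IsTrigPoly (n : ℕ) (f : ℝ → ℝ) : Prop :=
  ∃ H : ℂ[X], H.natDegree ≤ 2 * n ∧
    ∀ t : ℝ, H.eval (Complex.exp (t * I)) = Complex.exp (t * I) ^ n * f t

namespace IsTrigPoly

variable {m n : ℕ} {f g : ℝ → ℝ}

theorem const (n : ℕ) (c : ℝ) : IsTrigPoly n fun _ ↦ c :=
  ⟨C (c : ℂ) * X ^ n, natDegree_C_mul_X_pow_le _ _ |>.trans (by omega),
    fun t ↦ by rw [eval_mul, eval_C, eval_X_pow, mul_comm]⟩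

theorem add (hf : IsTrigPoly n f) (hg : IsTrigPoly n g) : IsTrigPoly n fun t ↦ f t + g t := by
  obtain ⟨F, hF, hFf⟩ := hf
  obtain ⟨G, hG, hGg⟩ := hg
  exact ⟨F + G, natDegree_add_le_of_degree_le hF hG, fun t ↦ by simp [hFf, hGg, mul_add]⟩

theorem const_mul (c : ℝ) (hf : IsTrigPoly n f) : IsTrigPoly n fun t ↦ c * f t := by
  obtain ⟨F, hF, hFf⟩ := hf
  exact ⟨C (c : ℂ) * F, (natDegree_C_mul_le _ _).trans hF, fun t ↦ by simp [hFf]; ring⟩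

theorem neg (hf : IsTrigPoly n f) : IsTrigPoly n fun t ↦ -f t := by
  simpa using hf.const_mul (-1)

theorem sub (hf : IsTrigPoly n f) (hg : IsTrigPoly n g) : IsTrigPoly n fun t ↦ f t - g t := by
  simpa [sub_eq_add_neg] using hf.add hg.neg

theorem mul (hf : IsTrigPoly m f) (hg : IsTrigPoly n g) :
    IsTrigPoly (m + n) fun t ↦ f t * g t := by
  obtain ⟨F, hF, hFf⟩ := hf
  obtain ⟨G, hG, hGg⟩ := hg
  exact ⟨F * G, (natDegree_mul_le_of_le hF hG).trans (by omega),
    fun t ↦ by simp [hFf, hGg]; ring⟩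

theorem mono (hf : IsTrigPoly m f) (hmn : m ≤ n) : IsTrigPoly n f := by
  obtain ⟨F, hF, hFf⟩ := hf
  refine ⟨X ^ (n - m) * F, (natDegree_mul_le_of_le (natDegree_X_pow_le _) hF).trans (by omega),
    fun t ↦ ?_⟩
  rw [eval_mul, eval_X_pow, hFf, ← mul_assoc, ← pow_add, Nat.sub_add_cancel hmn]

theorem pow (hf : IsTrigPoly n f) (k : ℕ) : IsTrigPoly (n * k) fun t ↦ f t ^ k := by
  induction k with
  | zero => simpa using const 0 1
  | succ k ih => simpa [pow_succ, Nat.mul_succ] using ih.mul hf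

theorem sum {ι : Type*} (s : Finset ι) {f : ι → ℝ → ℝ} (hf : ∀ i ∈ s, IsTrigPoly n (f i)) :
    IsTrigPoly n fun t ↦ ∑ i ∈ s, f i t := by
  classical
  induction s using Finset.induction_on with
  | empty => simpa using const n 0
  | insert i s hi ih =>
    simp only [Finset.sum_insert hi]
    exact (hf i (s.mem_insert_self i)).add (ih fun j hj ↦ hf j (Finset.mem_insert_of_mem hj))

theorem periodic (hf : IsTrigPoly n f) : Function.Periodic f (2 * π) := by
  obtain ⟨F, -, hFf⟩ := hf
  intro t
  have h := hFf (t + 2 * π)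
  rw [show ((t + 2 * π : ℝ) : ℂ) * I = t * I + 2 * π * I by push_cast; ring, Complex.exp_add,
    Complex.exp_two_pi_mul_I, mul_one, hFf t] at h
  exact_mod_cast (mul_left_cancel₀ (pow_ne_zero n (Complex.exp_ne_zero _)) h).symm

theorem differentiable (hf : IsTrigPoly n f) : Differentiable ℝ f := by
  obtain ⟨F, -, hFf⟩ := hf
  have hG : Differentiable ℝ fun t : ℝ ↦
      (Complex.exp (t * I) ^ n)⁻¹ * F.eval (Complex.exp (t * I)) := by
    fun_prop (disch := exact fun _ ↦ pow_ne_zero n (Complex.exp_ne_zero _))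
  have hfG : f = fun t : ℝ ↦ ((Complex.exp (t * I) ^ n)⁻¹ * F.eval (Complex.exp (t * I))).re := by
    ext t
    rw [hFf, inv_mul_cancel_left₀ (pow_ne_zero n (Complex.exp_ne_zero _)), Complex.ofReal_re]
  rw [hfG]
  exact Complex.reCLM.differentiable.comp hG

theorem deriv (hf : IsTrigPoly n f) : IsTrigPoly n (deriv f) := by
  have hdiff := hf.differentiable
  obtain ⟨F, hF, hFf⟩ := hf
  refine ⟨C I * (X * derivative F - C (n : ℂ) * F), ?_,
    fun t ↦ by simp [exp_mul_I_pow_mul_deriv hdiff hFf t]⟩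
  exact (natDegree_C_mul_le _ _).trans <| (natDegree_sub_le _ _).trans <|
    max_le ((natDegree_X_mul_derivative_le F).trans hF) ((natDegree_C_mul_le _ _).trans hF)

theorem eq_zero_of_card_le {a : ℝ} {s : Finset ℝ} (hf : IsTrigPoly n f)
    (hs : ↑s ⊆ Ico a (a + 2 * π)) (hzero : ∀ x ∈ s, f x = 0) (hcard : 2 * n ≤ s.card) {θ : ℝ}
    (hθ : f θ = 0) (hθ' : _root_.deriv f θ = 0) : f = 0 := by
  classical
  have hdiff := hf.differentiable
  obtain ⟨F, hF, hFf⟩ := hf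
  have hexp (t : ℝ) : Complex.exp (t * I) ≠ 0 := Complex.exp_ne_zero _
  suffices F = 0 by
    ext t
    simpa [this, hexp] using hFf t
  by_contra hF0
  have hroot (t : ℝ) (ht : f t = 0) : F.IsRoot (Complex.exp (t * I)) := by simp [IsRoot, hFf, ht]
  have hroot' : F.derivative.IsRoot (Complex.exp (θ * I)) := by
    have := exp_mul_I_pow_mul_deriv hdiff hFf θ
    rw [hθ', (hroot θ hθ).eq_zero] at this
    simpa [Complex.I_ne_zero, hexp, eq_comm] using this
  have hinj : InjOn (fun t : ℝ ↦ Complex.exp (t * I)) s :=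
    (Subtype.val_injective.comp_injOn (Circle.exp_injOn_Ico (by simp))).mono hs
  have := card_add_one_le_natDegree hF0 (S := s.image fun t : ℝ ↦ Complex.exp (t * I))
    (by simpa using fun t ht ↦ hroot t (hzero t ht))
    ((one_lt_rootMultiplicity_iff_isRoot hF0).2 ⟨hroot θ hθ, hroot'⟩)
  rw [Finset.card_image_of_injOn hinj] at this
  omega

theorem deriv_deriv_ne_zero_of_alternating (hf : IsTrigPoly n f) {t : ℕ → ℝ}
    (ht : StrictMono t) (ht2n : t (2 * n) = t 0 + 2 * π) (halt : ∀ j, 0 < (-1) ^ j * f (t j))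
    {θ : ℝ} (hθ : _root_.deriv f θ = 0) : _root_.deriv (_root_.deriv f) θ ≠ 0 := by
  have hcont := hf.differentiable.continuous
  have hn : 2 * n ≠ 0 := fun h ↦ by rw [h] at ht2n; linarith [pi_pos]
  choose α hα hαzero using exists_zero_mem_Ioo_of_alternating hcont ht halt
  have hαmono : StrictMono α := strictMono_nat_of_lt_succ fun j ↦ (hα j).2.trans (hα (j + 1)).1
  -- the zero following `α (2 * n - 1)` is taken to be `α 0 + 2 * π`, closing up the period
  set α' := Function.update α (2 * n) (α 0 + 2 * π)
  have hα'0 : α' 0 = α 0 := Function.update_of_ne (Ne.symm hn) _ _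
  have hα'2n : α' (2 * n) = α 0 + 2 * π := Function.update_self _ _ _
  have hα'mono : StrictMonoOn α' (Iic (2 * n)) := by
    intro i hi j hj hij
    have hi' : i ≠ 2 * n := by simp only [mem_Iic] at hj; omega
    rcases eq_or_ne j (2 * n) with rfl | hj'
    · rw [hα'2n]
      calc α' i = α i := Function.update_of_ne hi' _ _
        _ < t (i + 1) := (hα i).2
        _ ≤ t (2 * n) := ht.monotone (by omega)
        _ < α 0 + 2 * π := by rw [ht2n]; linarith [(hα 0).1]
    · simpa [α', Function.update_of_ne hi', Function.update_of_ne hj'] using hαmono hij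
  have hα'zero : ∀ j ≤ 2 * n, f (α' j) = 0 := by
    intro j _
    rcases eq_or_ne j (2 * n) with rfl | hj
    · rw [hα'2n, hf.periodic, hαzero]
    · simp [α', Function.update_of_ne hj, hαzero]
  obtain ⟨s, hcard, hs, hs0⟩ := exists_finset_deriv_eq_zero hcont hα'mono hα'zero
  rw [hα'0, hα'2n] at hs
  intro h2
  have hderiv := hf.deriv.eq_zero_of_card_le (hs.trans Ioo_subset_Ico_self) hs0 hcard.ge hθ h2
  have hconst := is_const_of_deriv_eq_zero hf.differentiable (congrFun hderiv) (t 0) (t 1)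
  have h0 := halt 0
  have h1 := halt 1
  simp only [pow_zero, one_mul, pow_one, neg_one_mul, hconst] at h0 h1
  linarith

end IsTrigPoly

theorem isTrigPoly_cos : IsTrigPoly 1 cos := by
  refine ⟨C (1 / 2 : ℂ) * (X ^ 2 + 1), (natDegree_C_mul_le _ _).trans (by compute_degree),
    fun t ↦ ?_⟩
  have := Complex.exp_ne_zero (t * I)
  rw [Complex.ofReal_cos, Complex.cos]
  simp only [eval_mul, eval_C, eval_add, eval_pow, eval_X, eval_one, neg_mul, Complex.exp_neg,
    pow_one]
  field_simp

theorem isTrigPoly_eval_cos {p : ℝ[X]} {n : ℕ} (hp : p.natDegree ≤ n) :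
    IsTrigPoly n fun t ↦ p.eval (cos t) := by
  simp_rw [eval_eq_sum_range' (Nat.lt_succ_of_le hp)]
  refine IsTrigPoly.sum _ fun i hi ↦ ?_
  exact ((isTrigPoly_cos.pow i).const_mul _).mono (by simpa [Nat.lt_succ_iff] using hi)

theorem isTrigPoly_sin_mul_sub (n : ℕ) (θ : ℝ) : IsTrigPoly n fun t ↦ sin (n * (t - θ)) := by
  set w := Complex.exp (n * θ * I)
  refine ⟨C (w⁻¹ / (2 * I)) * X ^ (2 * n) - C (w / (2 * I)), ?_, fun t ↦ ?_⟩
  · exact (natDegree_sub_le _ _).trans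
      (max_le (natDegree_C_mul_X_pow_le _ _) ((natDegree_C _).trans_le (Nat.zero_le _)))
  · set u := Complex.exp (t * I)
    have hw : w ≠ 0 := Complex.exp_ne_zero _
    have hu : u ≠ 0 := Complex.exp_ne_zero _
    have hz : Complex.exp ((n * (t - θ) : ℝ) * I) = u ^ n * w⁻¹ := by
      rw [← Complex.exp_nat_mul, ← Complex.exp_neg, ← Complex.exp_add]
      push_cast; ring_nf
    rw [Complex.ofReal_sin, Complex.sin, neg_mul, Complex.exp_neg, hz]
    simp only [eval_sub, eval_mul, eval_C, eval_X_pow]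
    field_simp
    linear_combination ((u ^ n) ^ 2 - w ^ 2) * Complex.I_sq

namespace IsTrigPoly

variable {n : ℕ} {f : ℝ → ℝ} {M : ℝ}

theorem deriv_le (hn : n ≠ 0) (hf : IsTrigPoly n f) (hM : ∀ t, |f t| ≤ M) (t : ℝ) :
    _root_.deriv f t ≤ n * M := by
  have hf' := hf.deriv
  obtain ⟨_, ⟨θ, rfl⟩, hmax⟩ := (hf'.periodic.compact_of_continuous two_pi_pos.ne'
    hf'.differentiable.continuous).exists_isGreatest (range_nonempty _)
  refine (hmax ⟨t, rfl⟩).trans (not_lt.1 fun hB ↦ ?_)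
  have hn' : (0 : ℝ) < n := by positivity
  set A := _root_.deriv f θ / n
  have hnA : n * A = _root_.deriv f θ := mul_div_cancel₀ _ hn'.ne'
  have hMA : M < A := by rw [lt_div_iff₀ hn']; linarith
  set h := fun s ↦ A * sin (n * (s - θ)) - f s
  have hh : IsTrigPoly n h := ((isTrigPoly_sin_mul_sub n θ).const_mul A).sub hf
  have hsin (s : ℝ) :
      HasDerivAt (fun s ↦ A * sin (n * (s - θ))) (n * A * cos (n * (s - θ))) s := by
    refine ((((hasDerivAt_id s).sub_const θ).const_mul (n : ℝ)).sin.const_mul A).congr_deriv ?_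
    simp only [id, mul_one]; ring
  have hcos : HasDerivAt (fun s ↦ n * A * cos (n * (s - θ))) 0 θ := by
    refine ((((hasDerivAt_id θ).sub_const θ).const_mul (n : ℝ)).cos.const_mul
      (n * A)).congr_deriv ?_
    simp
  have hderiv : _root_.deriv h = fun s ↦ n * A * cos (n * (s - θ)) - _root_.deriv f s :=
    funext fun s ↦ ((hsin s).sub (hf.differentiable s).hasDerivAt).deriv
  have hmax' : IsLocalMax (_root_.deriv f) θ := Filter.Eventually.of_forall fun s ↦ hmax ⟨s, rfl⟩
  refine hh.deriv_deriv_ne_zero_of_alternating (θ := θ)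
    (t := fun j ↦ θ + (2 * j + 1) * π / (2 * n)) ?_ ?_ (fun j ↦ ?_) (by simp [hderiv, hnA]) ?_
  · intro i j hij
    have : (i : ℝ) < j := by exact_mod_cast hij
    dsimp only
    gcongr
  · push_cast; field_simp; ring
  · set tj := θ + (2 * j + 1) * π / (2 * n)
    have harg : n * (tj - θ) = π / 2 + j * π := by simp only [tj]; field_simp; ring
    have hsq : ((-1 : ℝ) ^ j) * (-1) ^ j = 1 := by rw [← mul_pow]; norm_num
    have hftj : (-1) ^ j * f tj ≤ M := (le_abs_self _).trans (by simpa [abs_mul] using hM tj)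
    have hhtj : (-1) ^ j * h tj = A - (-1) ^ j * f tj := by
      simp only [h, harg, sin_add_nat_mul_pi, sin_pi_div_two]
      linear_combination A * hsq
    linarith
  · rw [hderiv, (hcos.fun_sub (hf'.differentiable θ).hasDerivAt).deriv, hmax'.deriv_eq_zero,
      sub_zero]

theorem abs_deriv_le (hn : n ≠ 0) (hf : IsTrigPoly n f) (hM : ∀ t, |f t| ≤ M) (t : ℝ) :
    |_root_.deriv f t| ≤ n * M := by
  refine abs_le.2 ⟨?_, hf.deriv_le hn hM t⟩
  have := hf.neg.deriv_le hn (by simpa using hM) t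
  rw [deriv.fun_neg] at this
  linarith

theorem abs_sub_le (hn : n ≠ 0) (hf : IsTrigPoly n f) (hM : ∀ t, |f t| ≤ M) (a b : ℝ) :
    |f a - f b| ≤ n * M * |a - b| := by
  simpa using convex_univ.norm_image_sub_le_of_norm_deriv_le (fun x _ ↦ hf.differentiable x)
    (fun x _ ↦ hf.abs_deriv_le hn hM x) (mem_univ b) (mem_univ a)

end IsTrigPoly

theorem exists_lt_abs_sub_le {m : ℕ} (hm : m ≠ 0) {δ θ₀ t : ℝ} (hδ : 0 < δ)
    (hθ₀ : θ₀ ∈ Icc 0 δ) (ht : t ∈ Icc 0 (m * δ)) : ∃ k < m, |t - (θ₀ + k * δ)| ≤ δ := by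
  set k := min ⌊t / δ⌋₊ (m - 1)
  have hlo : k * δ ≤ t := by
    rw [← le_div_iff₀ hδ]
    exact (Nat.cast_le.2 (min_le_left _ _)).trans (Nat.floor_le (div_nonneg ht.1 hδ.le))
  have hhi : t ≤ (k + 1) * δ := by
    rcases min_choice ⌊t / δ⌋₊ (m - 1) with hk | hk <;> simp only [k, hk]
    · rw [← div_le_iff₀ hδ]; exact (Nat.lt_floor_add_one _).le
    · rw [Nat.cast_sub (by omega), Nat.cast_one, sub_add_cancel]; exact ht.2
  refine ⟨k, by omega, abs_le.2 ⟨?_, ?_⟩⟩ <;> linarith [hθ₀.1, hθ₀.2]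

theorem abs_eval_le_chebNorm_s3 (p : ℝ[X]) {x : ℝ} (hx : x ∈ Icc (-1) 1) :
    |p.eval x| ≤ chebNorm p :=
  le_ciSup (f := fun x : Icc (-1 : ℝ) 1 ↦ |p.eval (x : ℝ)|)
    (isCompact_range (by fun_prop)).bddAbove ⟨x, hx⟩

theorem small_on_grid_implies_small_chebNorm (n : ℕ) (hn : 1 ≤ n)
    (p : Polynomial ℝ) (hdeg : p.degree ≤ n) (θ₀ : ℝ)
    (hθ₀ : θ₀ ∈ Set.Icc (0 : ℝ) (π / (9 * n)))
    (hp : ∀ k : ℕ, k < 9 * n → |p.eval (Real.cos (θ₀ + k * π / (9 * n)))| ≤ 1) :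
    chebNorm p < 5 / 3 := by
  set δ := π / (9 * n)
  have hδ : 0 < δ := by positivity
  have hf := isTrigPoly_eval_cos (natDegree_le_of_degree_le hdeg)
  have hfM (t : ℝ) : |p.eval (cos t)| ≤ chebNorm p :=
    abs_eval_le_chebNorm_s3 p ⟨neg_one_le_cos t, cos_le_one t⟩
  have hM0 : 0 ≤ chebNorm p := (abs_nonneg _).trans (hfM 0)
  have hkey : chebNorm p ≤ 1 + n * chebNorm p * δ := by
    have : Nonempty (Icc (-1 : ℝ) 1) := ⟨⟨0, by norm_num⟩⟩
    refine ciSup_le fun ⟨x, hx⟩ ↦ ?_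
    have hπ : ((9 * n : ℕ) : ℝ) * δ = π := by simp only [δ]; push_cast; field_simp
    obtain ⟨k, hk, hdist⟩ := exists_lt_abs_sub_le (by omega) hδ hθ₀
      ⟨arccos_nonneg x, hπ ▸ arccos_le_pi x⟩
    have hnode := hp k hk
    rw [mul_div_assoc] at hnode
    have hlip := hf.abs_sub_le (by omega) hfM (arccos x) (θ₀ + k * δ)
    rw [cos_arccos hx.1 hx.2] at hlip
    have : n * chebNorm p * |arccos x - (θ₀ + k * δ)| ≤ n * chebNorm p * δ := by gcongr
    linarith [abs_sub_abs_le_abs_sub (p.eval x) (p.eval (cos (θ₀ + k * δ)))]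
  have hnδ : n * δ = π / 9 := by simp only [δ]; field_simp
  rw [mul_comm (n : ℝ), mul_assoc, hnδ] at hkey
  nlinarith [pi_lt_d2]
end
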